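/- arXiv:1003.2047 — 2 statements merged into one kernel-verified Lean document; each statement's English description precedes it below -/
import Mathlib

section
/- If (α₁, α₂, α₃¹, …, α₃ʳ, α₄, α₅) is an admissible tuple in which the entries α₃¹, …, α₃ʳ are all ≥ 0, then F(α) does not belong to Diff₁. -/
/-- `Diff₁ = {(s, s, b·s + q) : -r ≤ s ≤ r, r-n ≤ q ≤ n-r}`, in coordinates recording the
coefficients of `D_t, D_y, D_v` in the Picard group. -/
def Diff1 (n r b : ℤ) : Set (ℤ × ℤ × ℤ) :=
  {p | ∃ s q : ℤ, -r ≤ s ∧ s ≤ r ∧ r - n ≤ q ∧ q ≤ n - r ∧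
    p = (s, s, b * s + q)}

/-- `Diff₂ = {(s, s-1, b·s + q) : 1-r ≤ s ≤ r, r-n+1 ≤ q ≤ n-r}`. -/
def Diff2 (n r b : ℤ) : Set (ℤ × ℤ × ℤ) :=
  {p | ∃ s q : ℤ, 1 - r ≤ s ∧ s ≤ r ∧ r - n + 1 ≤ q ∧ q ≤ n - r ∧
    p = (s, s - 1, b * s + q)}

/-- `Diff₃ = {(s, s+1, b·s + q) : -r ≤ s ≤ r-1, r-n ≤ q ≤ n-r-1}`. -/
def Diff3 (n r b : ℤ) : Set (ℤ × ℤ × ℤ) :=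
  {p | ∃ s q : ℤ, -r ≤ s ∧ s ≤ r - 1 ∧ r - n ≤ q ∧ q ≤ n - r - 1 ∧
    p = (s, s + 1, b * s + q)}

open Fin.NatCast in
/-- The predicate `P` on `ℤ/5` holds exactly on a cyclically consecutive block of length `m`
(starting at some index `i`). -/
def IsCyclicBlock (P : Fin 5 → Prop) (m : ℕ) : Prop :=
  ∃ i : Fin 5, ∀ k : Fin 5, P k ↔ ∃ d : ℕ, d < m ∧ k = i + (d : Fin 5)

/-- A tuple `(α₁, α₂, α₃¹, …, α₃ʳ, α₄, α₅)` (with `α₃ʲ = a3 j` for `1 ≤ j ≤ r`) is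
*admissible* if: the entries `α₃¹, …, α₃ʳ` are all `≤ -1` or all `≥ 0`; the set of negative
groups (group `3` being negative when all `α₃ʲ < 0`) is a cyclically consecutive block in
`(1,2,3,4,5)` of size exactly `2`, `3` or `5`; and if `α₁ < 0` then `α₁ ≤ -(n-r)`. -/
def Admissible (n r : ℤ) (α₁ α₂ α₄ α₅ : ℤ) (a3 : ℤ → ℤ) : Prop :=
  ((∀ j ∈ Finset.Icc 1 r, a3 j ≤ -1) ∨ (∀ j ∈ Finset.Icc 1 r, 0 ≤ a3 j)) ∧
  (∃ m ∈ ({2, 3, 5} : Set ℕ),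
    IsCyclicBlock ![α₁ < 0, α₂ < 0, ∀ j ∈ Finset.Icc 1 r, a3 j < 0, α₄ < 0, α₅ < 0] m) ∧
  (α₁ < 0 → α₁ ≤ -(n - r))

/-- `F(α) = (α₄ + Σ_{j=1}^r α₃ʲ, α₂ - α₅ + Σ_{j=1}^r α₃ʲ,
α₁ + b·α₃¹ + Σ_{j=2}^r (b - c_j)·α₃ʲ + α₅)`. -/
noncomputable def Fmap (r b : ℤ) (c : ℤ → ℤ) (α₁ α₂ α₄ α₅ : ℤ) (a3 : ℤ → ℤ) : ℤ × ℤ × ℤ :=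
  (α₄ + ∑ j ∈ Finset.Icc 1 r, a3 j,
   α₂ - α₅ + ∑ j ∈ Finset.Icc 1 r, a3 j,
   α₁ + b * a3 1 + (∑ j ∈ Finset.Icc 2 r, (b - c j) * a3 j) + α₅)

/-!
A negative block avoiding group 3 is one of {1,2}, {4,5}, {5,1}, {4,5,1}, {5,1,2}. Equality of
the first two coordinates of `F(α)` means `α₄ + α₅ = α₂`, which is impossible when `α₂` is
negative and `α₄, α₅` are not, or vice versa. In the remaining blocks `α₁, α₅ < 0 ≤ α₄`, and then
the offset `q = α₁ + α₅ - b·α₄ - Σ_{j≥2} c_j·α₃ʲ` of the third coordinate is below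
`α₁ ≤ r - n`.
-/

theorem IsCyclicBlock.cases_of_not_third {p₁ p₂ p₃ p₄ p₅ : Prop} {m : ℕ}
    (hblock : IsCyclicBlock ![p₁, p₂, p₃, p₄, p₅] m) (hm : m ∈ ({2, 3, 5} : Set ℕ)) (h₃ : ¬p₃) :
    (p₂ ∧ ¬p₄ ∧ ¬p₅) ∨ (¬p₂ ∧ p₄ ∧ p₅) ∨ (p₁ ∧ ¬p₄ ∧ p₅) := by
  obtain ⟨i, hi⟩ := hblock
  have hp₁ := hi 0; have hp₂ := hi 1; have hp₃ := hi 2; have hp₄ := hi 3; have hp₅ := hi 4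
  simp only [Matrix.cons_val_zero, Matrix.cons_val_one, Matrix.cons_val] at hp₁ hp₂ hp₃ hp₄ hp₅
  rw [hp₁, hp₂, hp₄, hp₅]
  rw [hp₃] at h₃
  simp only [Set.mem_insert_iff, Set.mem_singleton_iff] at hm
  rcases hm with rfl | rfl | rfl <;> fin_cases i <;> revert h₃ <;> decide

theorem Fmap_eq {r : ℤ} (hr : 1 ≤ r) (b : ℤ) (c : ℤ → ℤ) (α₁ α₂ α₄ α₅ : ℤ) (a3 : ℤ → ℤ) :
    Fmap r b c α₁ α₂ α₄ α₅ a3 =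
      (α₄ + ∑ j ∈ Finset.Icc 1 r, a3 j, α₂ - α₅ + ∑ j ∈ Finset.Icc 1 r, a3 j,
        α₁ + α₅ + b * ∑ j ∈ Finset.Icc 1 r, a3 j - ∑ j ∈ Finset.Icc 2 r, c j * a3 j) := by
  have hsplit : ∑ j ∈ Finset.Icc 1 r, a3 j = a3 1 + ∑ j ∈ Finset.Icc 2 r, a3 j := by
    rw [Finset.Icc_eq_cons_Ioc hr, Finset.sum_cons, ← Finset.Icc_add_one_left_eq_Ioc]
    rfl
  simp only [Fmap, hsplit, sub_mul, Finset.sum_sub_distrib, ← Finset.mul_sum]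
  ext <;> ring

theorem eq_and_le_sub_of_mem_Diff1 {n r b x y z : ℤ} (h : (x, y, z) ∈ Diff1 n r b) :
    x = y ∧ r - n ≤ z - b * x := by
  obtain ⟨s, q, -, -, hq, -, heq⟩ := h
  simp only [Prod.mk.injEq] at heq
  obtain ⟨rfl, rfl, rfl⟩ := heq
  exact ⟨rfl, by linarith⟩

theorem fmap_not_in_diff1_of_a3_nonneg_general (n r b : ℤ) (hr : 1 ≤ r) (hb : 0 ≤ b)
    (c : ℤ → ℤ) (hc : ∀ j ∈ Finset.Icc (2 : ℤ) r, 0 ≤ c j)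
    (α₁ α₂ α₄ α₅ : ℤ) (a3 : ℤ → ℤ)
    (hadm : Admissible n r α₁ α₂ α₄ α₅ a3)
    (hpos : ∀ j ∈ Finset.Icc (1 : ℤ) r, 0 ≤ a3 j) :
    Fmap r b c α₁ α₂ α₄ α₅ a3 ∉ Diff1 n r b := by
  intro hmem
  rw [Fmap_eq hr] at hmem
  obtain ⟨hfst, hthird⟩ := eq_and_le_sub_of_mem_Diff1 hmem
  obtain ⟨-, ⟨m, hm, hblock⟩, hα₁⟩ := hadm
  have hone : (1 : ℤ) ∈ Finset.Icc 1 r := Finset.mem_Icc.mpr ⟨le_rfl, hr⟩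
  have hα₃ : ¬∀ j ∈ Finset.Icc 1 r, a3 j < 0 := fun h => (h 1 hone).not_ge (hpos 1 hone)
  have hT : 0 ≤ ∑ j ∈ Finset.Icc 2 r, c j * a3 j := Finset.sum_nonneg fun j hj =>
    mul_nonneg (hc j hj) (hpos j (Finset.Icc_subset_Icc_left one_le_two hj))
  rcases hblock.cases_of_not_third hm hα₃ with ⟨h₂, h₄, h₅⟩ | ⟨h₂, h₄, h₅⟩ | ⟨h₁, h₄, h₅⟩
  · linarith
  · linarith
  · linarith [hα₁ h₁, mul_nonneg hb (not_lt.mp h₄)]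

/-- If `(α₁, α₂, α₃¹, …, α₃ʳ, α₄, α₅)` is an admissible tuple in which the
entries `α₃¹, …, α₃ʳ` are all `≥ 0`, then `F(α) ∉ Diff₁`. -/
theorem fmap_not_in_diff1_of_a3_nonneg (n r b : ℤ) (hr : 1 ≤ r) (hrn : r ≤ n - 1) (hb : 0 ≤ b)
    (c : ℤ → ℤ) (hc : ∀ j ∈ Finset.Icc (2 : ℤ) r, 0 ≤ c j)
    (α₁ α₂ α₄ α₅ : ℤ) (a3 : ℤ → ℤ)
    (hadm : Admissible n r α₁ α₂ α₄ α₅ a3)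
    (hpos : ∀ j ∈ Finset.Icc (1 : ℤ) r, 0 ≤ a3 j) :
    Fmap r b c α₁ α₂ α₄ α₅ a3 ∉ Diff1 n r b :=
  fmap_not_in_diff1_of_a3_nonneg_general n r b hr hb c hc α₁ α₂ α₄ α₅ a3 hadm hpos
end

section
/- For every admissible tuple (α₁, α₂, α₃¹, …, α₃ʳ, α₄, α₅), the point F(α) does not belong to Diff₁ ∪ Diff₂ ∪ Diff₃. (This is the arithmetic core of the proof that all differences of elements of Col are acyclic line bundles, hence that Col gives a strongly exceptional collection.) -/
/-!
Write a point of `ℤ³` as `(s, s + e, b·s + q)`. Every point of `Diff₁ ∪ Diff₂ ∪ Diff₃` has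
`s ≥ -r`, `q ≥ r - n` and `|e| ≤ 1`, with `s ≥ 1 - r` and `q ≥ r - n + 1` when `e = -1`.
For `F(α)` one finds `s = α₄ + Σ α₃ʲ`, `e = α₂ - α₅ - α₄` and
`q = α₁ + α₅ - b·α₄ - Σ_{j ≥ 2} c_j α₃ʲ`. The admissible sign patterns fall into four shapes:
`α₃, α₄ < 0` makes `s ≤ -r - 1`; `α₄, α₅ < 0 ≤ α₂` makes `e ≥ 2`; `α₁, α₅ < 0 ≤ α₃, α₄`
makes `q ≤ r - n - 1`; and `α₂ < 0 ≤ α₄, α₅` forces `e = -1`, after which a negative `α₃`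
gives `s ≤ -r` and a negative `α₁` gives `q ≤ r - n`.
-/

lemma bounds_of_mem_diff {n r b : ℤ} {p : ℤ × ℤ × ℤ}
    (h : p ∈ Diff1 n r b ∪ Diff2 n r b ∪ Diff3 n r b) :
    -r ≤ p.1 ∧ r - n ≤ p.2.2 - b * p.1 ∧ -1 ≤ p.2.1 - p.1 ∧ p.2.1 - p.1 ≤ 1 ∧
      (p.2.1 - p.1 = -1 → 1 - r ≤ p.1 ∧ r - n + 1 ≤ p.2.2 - b * p.1) := by
  rcases h with (h | h) | h <;> obtain ⟨s, q, hs₁, hs₂, hq₁, hq₂, rfl⟩ := h <;>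
    dsimp only <;>
    exact ⟨by omega, by linarith, by omega, by omega, fun _ => ⟨by omega, by linarith⟩⟩

lemma sum_Icc_le_neg_of_neg (f : ℤ → ℤ) (r : ℤ) (hf : ∀ j ∈ Finset.Icc 1 r, f j < 0) :
    ∑ j ∈ Finset.Icc 1 r, f j ≤ -r := by
  calc ∑ j ∈ Finset.Icc 1 r, f j ≤ ∑ _j ∈ Finset.Icc 1 r, (-1 : ℤ) :=
        Finset.sum_le_sum fun j hj => Int.le_sub_one_of_lt (hf j hj)
    _ = -r.toNat := by simp
    _ ≤ -r := by omega

lemma IsCyclicBlock.cases_of_mem {P : Fin 5 → Prop} {m : ℕ} (hm : m ∈ ({2, 3, 5} : Set ℕ))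
    (h : IsCyclicBlock P m) :
    (P 2 ∧ P 3) ∨ (P 3 ∧ P 4 ∧ ¬P 1) ∨ (P 0 ∧ P 4 ∧ ¬P 2 ∧ ¬P 3) ∨
      (P 1 ∧ ¬P 3 ∧ ¬P 4 ∧ (P 2 ∨ P 0 ∧ ¬P 2)) := by
  obtain ⟨i, hi⟩ := h
  simp only [Set.mem_insert_iff, Set.mem_singleton_iff] at hm
  fin_cases i <;> rcases hm with rfl | rfl | rfl <;> simp only [hi] <;> decide

section Fmap

variable (r b : ℤ) (c : ℤ → ℤ) (α₁ α₂ α₄ α₅ : ℤ) (a3 : ℤ → ℤ)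

lemma Fmap_snd_fst_sub_fst :
    (Fmap r b c α₁ α₂ α₄ α₅ a3).2.1 - (Fmap r b c α₁ α₂ α₄ α₅ a3).1 = α₂ - α₅ - α₄ := by
  simp only [Fmap]; ring

lemma Fmap_snd_snd_sub_mul_fst (hr : 1 ≤ r) :
    (Fmap r b c α₁ α₂ α₄ α₅ a3).2.2 - b * (Fmap r b c α₁ α₂ α₄ α₅ a3).1 =
      α₁ + α₅ - b * α₄ - ∑ j ∈ Finset.Icc 2 r, c j * a3 j := by
  have hIcc : Finset.Icc 1 r = insert 1 (Finset.Icc 2 r) :=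
    (Finset.insert_Icc_add_one_left_eq_Icc hr).symm
  simp only [Fmap, hIcc, Finset.sum_insert (show (1 : ℤ) ∉ Finset.Icc 2 r by simp),
    sub_mul, Finset.sum_sub_distrib, ← Finset.mul_sum]
  ring

end Fmap

theorem fmap_not_in_diff_general (n r b : ℤ) (hr : 1 ≤ r) (hb : 0 ≤ b)
    (c : ℤ → ℤ) (hc : ∀ j ∈ Finset.Icc (2 : ℤ) r, 0 ≤ c j)
    (α₁ α₂ α₄ α₅ : ℤ) (a3 : ℤ → ℤ)
    (hadm : Admissible n r α₁ α₂ α₄ α₅ a3) :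
    Fmap r b c α₁ α₂ α₄ α₅ a3 ∉ Diff1 n r b ∪ Diff2 n r b ∪ Diff3 n r b := by
  obtain ⟨h3sign, ⟨m, hm, hblock⟩, hα₁⟩ := hadm
  have hT_nonneg (h3 : ¬∀ j ∈ Finset.Icc 1 r, a3 j < 0) :
      0 ≤ ∑ j ∈ Finset.Icc 2 r, c j * a3 j := by
    have ha3 := h3sign.resolve_left fun h => h3 fun j hj => (h j hj).trans_lt (by norm_num)
    exact Finset.sum_nonneg fun j hj =>
      mul_nonneg (hc j hj) (ha3 j (Finset.Icc_subset_Icc_left (by norm_num) hj))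
  intro hmem
  obtain ⟨hs, hq, he₁, he₂, he⟩ := bounds_of_mem_diff hmem
  rw [Fmap_snd_fst_sub_fst] at he₁ he₂ he
  rw [Fmap_snd_snd_sub_mul_fst _ _ _ _ _ _ _ _ hr] at hq he
  simp only [Fmap] at hs he
  rcases hblock.cases_of_mem hm with ⟨h3, h4⟩ | ⟨h4, h5, h2⟩ | ⟨h1n, h5, h3, h4⟩ |
      ⟨h2, h4, h5, h3 | ⟨h1n, h3⟩⟩ <;>
    simp only [Matrix.cons_val, not_lt] at *
  · linarith [sum_Icc_le_neg_of_neg a3 r h3]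
  · linarith
  · linarith [hα₁ h1n, hT_nonneg h3, mul_nonneg hb h4]
  · linarith [sum_Icc_le_neg_of_neg a3 r h3, he (by linarith)]
  · linarith [hα₁ h1n, hT_nonneg h3, mul_nonneg hb h4, he (by linarith)]

/-- For every admissible tuple `(α₁, α₂, α₃¹, …, α₃ʳ, α₄, α₅)`, the point
`F(α)` does not belong to `Diff₁ ∪ Diff₂ ∪ Diff₃`. This is the arithmetic core of the proof
that all differences of elements of `Col` are acyclic line bundles, hence that `Col` gives a
strongly exceptional collection. -/
theorem fmap_not_in_diff (n r b : ℤ) (hr : 1 ≤ r) (hrn : r ≤ n - 1) (hb : 0 ≤ b)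
    (c : ℤ → ℤ) (hc : ∀ j ∈ Finset.Icc (2 : ℤ) r, 0 ≤ c j)
    (α₁ α₂ α₄ α₅ : ℤ) (a3 : ℤ → ℤ)
    (hadm : Admissible n r α₁ α₂ α₄ α₅ a3) :
    Fmap r b c α₁ α₂ α₄ α₅ a3 ∉ Diff1 n r b ∪ Diff2 n r b ∪ Diff3 n r b :=
  fmap_not_in_diff_general n r b hr hb c hc α₁ α₂ α₄ α₅ a3 hadm
end
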